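/- Let a ≥ 0. There exist real numbers M₁, M₂ satisfying ((3-a²)/2)M₂ - aM₂² + 2aM₁ + M₁M₂ = 0 and M₂² + aM₂ - 3M₁ - (a²+9)/8 = 0. Moreover, for any such pair, the point (M₁, M₂, 0, 1) is an equilibrium of the system Ṁ₁ = aM₁M₃ + M₂M₃, Ṁ₂ = aM₂M₃ - M₁M₃, Ṁ₃ = ((3-a²)/2)M₂M₄ - aM₂² + 2aM₁M₄ + M₁M₂, Ṁ₄ = 0, and it satisfies M₂² + aM₂M₄ - 3M₁M₄ + M₃² - ((9+a²)/8)M₄² = 0. -/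
import Mathlib


open Real

/-- Case (D), the group `G₃.₅ᵃ`: existence of stationary points of the
Lie–Poisson equation on the zero level of the Hamiltonian. -/
theorem stmt_5 (a : ℝ) (ha : 0 ≤ a) :
    (∃ M₁ M₂ : ℝ,
      ((3 - a ^ 2) / 2) * M₂ - a * M₂ ^ 2 + 2 * a * M₁ + M₁ * M₂ = 0 ∧
      M₂ ^ 2 + a * M₂ - 3 * M₁ - (a ^ 2 + 9) / 8 = 0) ∧
    ∀ M₁ M₂ : ℝ,
      ((3 - a ^ 2) / 2) * M₂ - a * M₂ ^ 2 + 2 * a * M₁ + M₁ * M₂ = 0 →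
      M₂ ^ 2 + a * M₂ - 3 * M₁ - (a ^ 2 + 9) / 8 = 0 →
      ((fun M : ℝ × ℝ × ℝ × ℝ =>
          (a * M.1 * M.2.2.1 + M.2.1 * M.2.2.1,
            a * M.2.1 * M.2.2.1 - M.1 * M.2.2.1,
            ((3 - a ^ 2) / 2) * M.2.1 * M.2.2.2 - a * M.2.1 ^ 2
              + 2 * a * M.1 * M.2.2.2 + M.1 * M.2.1,
            (0 : ℝ))) (M₁, M₂, 0, 1) = (0, 0, 0, 0)) ∧
      M₂ ^ 2 + a * M₂ * 1 - 3 * M₁ * 1 + (0 : ℝ) ^ 2 - (9 + a ^ 2) / 8 * 1 ^ 2 = 0 := by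
  constructor
  · -- existence: find a root of the cubic x³ + 3c x - 2 a c = 0, c = (a²+9)/8
    set c : ℝ := (a ^ 2 + 9) / 8 with hc
    have hcpos : 0 < c := by positivity
    have hf : Continuous fun x : ℝ => x ^ 3 + 3 * c * x - 2 * a * c := by continuity
    have h0 : (fun x : ℝ => x ^ 3 + 3 * c * x - 2 * a * c) 0 ≤ 0 := by
      simp only; nlinarith
    have h1 : 0 ≤ (fun x : ℝ => x ^ 3 + 3 * c * x - 2 * a * c) a := by
      simp only; nlinarith
    obtain ⟨x, _, hx⟩ := intermediate_value_Icc ha hf.continuousOn ⟨h0, h1⟩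
    refine ⟨(x ^ 2 + a * x - c) / 3, x, ?_, by ring⟩
    simp only at hx
    linear_combination (1 / 3) * hx
  · intro M₁ M₂ h1 h2
    refine ⟨?_, by linarith⟩
    simp only [Prod.mk.injEq]
    refine ⟨by ring, by ring, ?_, trivial⟩
    linarith
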